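/- arXiv:2510.12757 — 2 statements merged into one kernel-verified Lean document; each statement's English description precedes it below -/
import Mathlib

section
/- Let P ⊆ Im(O') be a 3-dimensional subspace with q|_P positive definite. Then the map sending a pair (u,v), with u ∈ P, q(u) = 1, v ∈ P⊥, q(v) = −1, to the line ℝ(u+v), surjects onto the set of isotropic lines of Im(O'), and it is exactly two-to-one: for every isotropic line ℓ the pairs mapping to ℓ are precisely (u,v) and (−u,−v) for a single such pair (u,v). -/
noncomputable section

open Quaternion

/-- The split octonions `𝕆' = ℍ × ℍ`. -/
abbrev SplitOct : Type := ℍ[ℝ] × ℍ[ℝ]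

namespace SplitOct

/-- Split octonion multiplication `(a,b)(c,d) = (ac + d̄b, da + bc̄)`. -/
def mul (x y : SplitOct) : SplitOct :=
  (x.1 * y.1 + star y.2 * x.2, y.2 * x.1 + x.2 * star y.1)

/-- Split octonion conjugation `(a,b)* = (ā, −b)`. -/
def conj (x : SplitOct) : SplitOct := (star x.1, -x.2)

lemma conj_add (x y : SplitOct) : conj (x + y) = conj x + conj y := by
  simp only [conj, Prod.fst_add, Prod.snd_add, star_add, Prod.mk_add_mk, neg_add]

lemma conj_neg (x : SplitOct) : conj (-x) = -conj x := by
  simp [conj, Prod.ext_iff]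

lemma conj_sub (x y : SplitOct) : conj (x - y) = conj x - conj y := by
  rw [sub_eq_add_neg, conj_add, conj_neg, ← sub_eq_add_neg]

lemma conj_smul (r : ℝ) (x : SplitOct) : conj (r • x) = r • conj x := by
  simp [conj, Prod.ext_iff]

lemma conj_conj (x : SplitOct) : conj (conj x) = x := by
  simp [conj]

lemma conj_zero : conj 0 = 0 := by
  simp [conj, Prod.ext_iff]

/-- The imaginary split octonions `Im 𝕆' = {x | x* = −x}`. -/
def Im : Submodule ℝ SplitOct where
  carrier := {x | conj x = -x}
  add_mem' := by
    intro a b ha hb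
    simp only [Set.mem_setOf_eq] at ha hb ⊢
    rw [conj_add, ha, hb, neg_add]
  zero_mem' := by
    simp only [Set.mem_setOf_eq, conj_zero, neg_zero]
  smul_mem' := by
    intro r a ha
    simp only [Set.mem_setOf_eq] at ha ⊢
    rw [conj_smul, ha, smul_neg]

lemma mem_Im_iff {x : SplitOct} : x ∈ Im ↔ conj x = -x := Iff.rfl

/-- `q x = x·x*`, read as a real number (its values lie in `ℝ·1 ≅ ℝ`). -/
def q (x : SplitOct) : ℝ := (mul x (conj x)).1.re

/-- The polarization `⟨x,y⟩` of the quadratic form `q`. -/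
def polar (x y : SplitOct) : ℝ := (q (x + y) - q x - q y) / 2

/-- The cross product `x × y = (xy − (xy)*)/2`. -/
def cross (x y : SplitOct) : SplitOct := (2 : ℝ)⁻¹ • (mul x y - conj (mul x y))

/-- The scalar triple product `Ω(u,v,w) = ⟨u×v, w⟩`. -/
def triple (u v w : SplitOct) : ℝ := polar (cross u v) w

lemma q_apply (x : SplitOct) : q x = normSq x.1 - normSq x.2 := by
  simp only [q, mul, conj, star_neg, neg_mul, Quaternion.self_mul_star, Quaternion.star_mul_self,
    Quaternion.re_add, Quaternion.re_neg, Quaternion.re_coe]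
  ring

lemma polar_apply (x y : SplitOct) :
    polar x y = (x.1 * star y.1).re - (x.2 * star y.2).re := by
  simp only [polar, q_apply, Prod.fst_add, Prod.snd_add, Quaternion.normSq_def',
    Quaternion.re_mul, Quaternion.re_add, Quaternion.imI_add, Quaternion.imJ_add,
    Quaternion.imK_add, Quaternion.re_star, Quaternion.imI_star, Quaternion.imJ_star,
    Quaternion.imK_star]
  ring

lemma polar_add_left (x x' y : SplitOct) : polar (x + x') y = polar x y + polar x' y := by
  simp only [polar_apply, Prod.fst_add, Prod.snd_add, add_mul, Quaternion.re_add]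
  ring

lemma polar_add_right (x y y' : SplitOct) : polar x (y + y') = polar x y + polar x y' := by
  simp only [polar_apply, Prod.fst_add, Prod.snd_add, star_add, mul_add, Quaternion.re_add]
  ring

lemma polar_smul_left (r : ℝ) (x y : SplitOct) : polar (r • x) y = r * polar x y := by
  simp only [polar_apply, Prod.smul_fst, Prod.smul_snd, smul_mul_assoc, Quaternion.re_smul,
    smul_eq_mul]
  ring

lemma polar_smul_right (r : ℝ) (x y : SplitOct) : polar x (r • y) = r * polar x y := by
  simp only [polar_apply, Prod.smul_fst, Prod.smul_snd, Quaternion.star_smul,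
    mul_smul_comm, Quaternion.re_smul, smul_eq_mul]
  ring

lemma polar_zero_left (y : SplitOct) : polar 0 y = 0 := by
  simp [polar_apply]

lemma polar_zero_right (x : SplitOct) : polar x 0 = 0 := by
  simp [polar_apply]

lemma mul_add_left (x x' y : SplitOct) : mul (x + x') y = mul x y + mul x' y := by
  simp only [mul, Prod.fst_add, Prod.snd_add, add_mul, mul_add, Prod.mk_add_mk, Prod.mk.injEq]
  constructor <;> abel

lemma mul_add_right (x y y' : SplitOct) : mul x (y + y') = mul x y + mul x y' := by
  simp only [mul, Prod.fst_add, Prod.snd_add, star_add, add_mul, mul_add, Prod.mk_add_mk,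
    Prod.mk.injEq]
  constructor <;> abel

lemma mul_smul_left (r : ℝ) (x y : SplitOct) : mul (r • x) y = r • mul x y := by
  simp only [mul, Prod.smul_fst, Prod.smul_snd, smul_mul_assoc, mul_smul_comm, Prod.smul_mk,
    smul_add]

lemma mul_smul_right (r : ℝ) (x y : SplitOct) : mul x (r • y) = r • mul x y := by
  simp only [mul, Prod.smul_fst, Prod.smul_snd, Quaternion.star_smul, smul_mul_assoc,
    mul_smul_comm, Prod.smul_mk, smul_add]

lemma mul_zero_left (y : SplitOct) : mul 0 y = 0 := by
  simp [mul, Prod.ext_iff]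

lemma mul_zero_right (x : SplitOct) : mul x 0 = 0 := by
  simp [mul, Prod.ext_iff]

lemma cross_add_left (x x' y : SplitOct) : cross (x + x') y = cross x y + cross x' y := by
  rw [cross, cross, cross, mul_add_left, conj_add]
  module

lemma cross_add_right (x y y' : SplitOct) : cross x (y + y') = cross x y + cross x y' := by
  rw [cross, cross, cross, mul_add_right, conj_add]
  module

lemma cross_smul_left (r : ℝ) (x y : SplitOct) : cross (r • x) y = r • cross x y := by
  rw [cross, cross, mul_smul_left, conj_smul]
  module

lemma cross_smul_right (r : ℝ) (x y : SplitOct) : cross x (r • y) = r • cross x y := by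
  rw [cross, cross, mul_smul_right, conj_smul]
  module

lemma cross_zero_left (y : SplitOct) : cross 0 y = 0 := by
  simp [cross, mul_zero_left, conj_zero]

lemma cross_zero_right (x : SplitOct) : cross x 0 = 0 := by
  simp [cross, mul_zero_right, conj_zero]

lemma cross_mem_Im (x y : SplitOct) : cross x y ∈ Im := by
  rw [mem_Im_iff, cross, conj_smul, conj_sub, conj_conj]
  module

lemma triple_add₁ (u u' v w : SplitOct) :
    triple (u + u') v w = triple u v w + triple u' v w := by
  rw [triple, triple, triple, cross_add_left, polar_add_left]

lemma triple_add₂ (u v v' w : SplitOct) :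
    triple u (v + v') w = triple u v w + triple u v' w := by
  rw [triple, triple, triple, cross_add_right, polar_add_left]

lemma triple_add₃ (u v w w' : SplitOct) :
    triple u v (w + w') = triple u v w + triple u v w' :=
  polar_add_right _ _ _

lemma triple_smul₁ (r : ℝ) (u v w : SplitOct) : triple (r • u) v w = r * triple u v w := by
  rw [triple, triple, cross_smul_left, polar_smul_left]

lemma triple_smul₂ (r : ℝ) (u v w : SplitOct) : triple u (r • v) w = r * triple u v w := by
  rw [triple, triple, cross_smul_right, polar_smul_left]

lemma triple_smul₃ (r : ℝ) (u v w : SplitOct) : triple u v (r • w) = r * triple u v w :=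
  polar_smul_right _ _ _

lemma triple_zero₁ (v w : SplitOct) : triple 0 v w = 0 := by
  rw [triple, cross_zero_left, polar_zero_left]

lemma triple_zero₂ (u w : SplitOct) : triple u 0 w = 0 := by
  rw [triple, cross_zero_right, polar_zero_left]

lemma triple_zero₃ (u v : SplitOct) : triple u v 0 = 0 :=
  polar_zero_right _

/-- The orthogonal complement of `P` inside the imaginary split octonions. -/
def orth (P : Submodule ℝ SplitOct) : Submodule ℝ SplitOct where
  carrier := {x | x ∈ Im ∧ ∀ y ∈ P, polar x y = 0}
  add_mem' := by
    rintro a b ⟨ha1, ha2⟩ ⟨hb1, hb2⟩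
    exact ⟨Im.add_mem ha1 hb1, fun y hy => by
      rw [polar_add_left, ha2 y hy, hb2 y hy, add_zero]⟩
  zero_mem' := ⟨Im.zero_mem, fun y _ => polar_zero_left y⟩
  smul_mem' := by
    rintro r a ⟨ha1, ha2⟩
    exact ⟨Im.smul_mem r ha1, fun y hy => by
      rw [polar_smul_left, ha2 y hy, mul_zero]⟩

/-- The annihilator `Ann x = {v ∈ Im 𝕆' | x × v = 0}`. -/
def Ann (x : SplitOct) : Submodule ℝ SplitOct where
  carrier := {v | v ∈ Im ∧ cross x v = 0}
  add_mem' := by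
    rintro a b ⟨ha1, ha2⟩ ⟨hb1, hb2⟩
    exact ⟨Im.add_mem ha1 hb1, by rw [cross_add_right, ha2, hb2, add_zero]⟩
  zero_mem' := ⟨Im.zero_mem, cross_zero_right x⟩
  smul_mem' := by
    rintro r a ⟨ha1, ha2⟩
    exact ⟨Im.smul_mem r ha1, by rw [cross_smul_right, ha2, smul_zero]⟩

/-- An isotropic line of `Im 𝕆'`. -/
def IsIsotropicLine (ℓ : Submodule ℝ SplitOct) : Prop :=
  ∃ x, x ∈ Im ∧ x ≠ 0 ∧ q x = 0 ∧ ℓ = Submodule.span ℝ {x}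

/-- An annihilator photon: a 2-dimensional totally isotropic subspace of `Im 𝕆'`
on which the cross product vanishes identically. -/
def IsAnnihilatorPhoton (ω : Submodule ℝ SplitOct) : Prop :=
  ω ≤ Im ∧ Module.finrank ℝ ω = 2 ∧ (∀ x ∈ ω, q x = 0) ∧
    ∀ x ∈ ω, ∀ y ∈ ω, cross x y = 0

/-!
`Im 𝕆'` splits orthogonally as `P ⊕ P⊥`. It contains the negative definite 4-space `0 × ℍ` and
has dimension 7, so it has no positive semidefinite 4-space; hence `P⊥` is negative definite.
An isotropic `x = p + m` (`p ∈ P`, `m ∈ P⊥`) therefore has `q p = -q m > 0`, and rescaling by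
`1 / √(q p)` gives a preimage. Uniqueness of the splitting forces any other preimage of `ℝx`
to be a scalar multiple `c • (u, v)` with `c² = 1`.
-/

lemma polar_symm (x y : SplitOct) : polar x y = polar y x := by
  simp only [polar_apply, Quaternion.re_mul, Quaternion.re_star, Quaternion.imI_star,
    Quaternion.imJ_star, Quaternion.imK_star]
  ring

lemma polar_self (x : SplitOct) : polar x x = q x := by
  simp [polar_apply, q_apply, Quaternion.self_mul_star]

lemma q_add (x y : SplitOct) : q (x + y) = q x + q y + 2 * polar x y := by
  rw [polar]; ring

lemma q_smul (r : ℝ) (x : SplitOct) : q (r • x) = r ^ 2 * q x := by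
  simp only [q_apply, Prod.smul_fst, Prod.smul_snd, Quaternion.normSq_smul]
  ring

lemma q_neg (x : SplitOct) : q (-x) = q x := by
  simpa using q_smul (-1) x

lemma Im_ne_top : Im ≠ ⊤ := by
  intro h
  have h1 : conj (1, 0) = -((1, 0) : SplitOct) := mem_Im_iff.1 (h ▸ Submodule.mem_top)
  have h2 := congrArg (fun x : SplitOct => x.1.re) h1
  norm_num [conj] at h2

def polarBilin : LinearMap.BilinForm ℝ SplitOct :=
  LinearMap.mk₂ ℝ polar polar_add_left polar_smul_left polar_add_right polar_smul_right

lemma polarBilin_isRefl : polarBilin.IsRefl := fun x y h => (polar_symm y x).trans h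

section PosDef

variable {P : Submodule ℝ SplitOct} (hPpos : ∀ v ∈ P, v ≠ 0 → 0 < q v)
include hPpos

lemma eq_zero_of_mem_of_polar_eq_zero {d : SplitOct} (hd : d ∈ P)
    (hdP : ∀ y ∈ P, polar d y = 0) : d = 0 := by
  by_contra hd0
  exact (hPpos d hd hd0).ne' (polar_self d ▸ hdP d hd)

lemma disjoint_orth : Disjoint P (orth P) :=
  Submodule.disjoint_def.2 fun _ hd hdO => eq_zero_of_mem_of_polar_eq_zero hPpos hd hdO.2

lemma eq_of_add_eq_add {u v u' v' : SplitOct} (hu : u ∈ P) (hv : v ∈ orth P) (hu' : u' ∈ P)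
    (hv' : v' ∈ orth P) (h : u + v = u' + v') : u = u' ∧ v = v' := by
  have huv : u - u' = v' - v := by rw [sub_eq_sub_iff_add_eq_add, h, add_comm]
  have hd : u - u' = 0 := Submodule.disjoint_def.1 (disjoint_orth hPpos) _
    (P.sub_mem hu hu') (huv ▸ (orth P).sub_mem hv' hv)
  exact ⟨sub_eq_zero.1 hd, (sub_eq_zero.1 (huv ▸ hd)).symm⟩

lemma exists_eq_add_of_mem_Im (hPIm : P ≤ Im) {x : SplitOct} (hx : x ∈ Im) :
    ∃ p ∈ P, ∃ m ∈ orth P, x = p + m := by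
  have hcompl : IsCompl P (polarBilin.orthogonal P) :=
    (LinearMap.BilinForm.isCompl_orthogonal_iff_disjoint polarBilin_isRefl).2 <|
      Submodule.disjoint_def.2 fun d hd hdO =>
        eq_zero_of_mem_of_polar_eq_zero hPpos hd fun y hy => (polar_symm d y).trans (hdO y hy)
  obtain ⟨p, hp, m, hm, hpm⟩ :=
    Submodule.mem_sup.1 (hcompl.sup_eq_top ▸ Submodule.mem_top (x := x))
  have hmIm : m ∈ Im := by
    rw [eq_sub_of_add_eq' hpm]
    exact Im.sub_mem hx (hPIm hp)
  exact ⟨p, hp, m, ⟨hmIm, fun y hy => (polar_symm m y).trans (hm y hy)⟩, hpm.symm⟩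

end PosDef

lemma finrank_le_three_of_nonneg {S : Submodule ℝ SplitOct} (hS : S ≤ Im)
    (hnonneg : ∀ x ∈ S, 0 ≤ q x) : Module.finrank ℝ S ≤ 3 := by
  set W := LinearMap.range (LinearMap.inr ℝ ℍ[ℝ] ℍ[ℝ])
  have hW : Module.finrank ℝ W = 4 := by
    rw [LinearMap.finrank_range_of_inj LinearMap.inr_injective, Quaternion.finrank_eq_four]
  have hWIm : W ≤ Im := by
    rintro _ ⟨b, rfl⟩
    simp [mem_Im_iff, conj]
  have hdisj : S ⊓ W = ⊥ := by
    refine (Submodule.eq_bot_iff _).2 fun x ⟨hxS, b, hb⟩ => ?_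
    subst hb
    have hb : normSq b ≤ 0 := by simpa [q_apply] using hnonneg _ hxS
    simp [normSq_eq_zero.1 (hb.antisymm normSq_nonneg)]
  have hsup := Submodule.finrank_sup_add_finrank_inf_eq S W
  have hIm := Submodule.finrank_mono (sup_le hS hWIm)
  have hlt := Submodule.finrank_lt Im_ne_top
  rw [Module.finrank_prod, Quaternion.finrank_eq_four] at hlt
  rw [hdisj, finrank_bot, hW] at hsup
  omega

section Spacelike

variable {P : Submodule ℝ SplitOct} (hPIm : P ≤ Im) (hPpos : ∀ v ∈ P, v ≠ 0 → 0 < q v)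
include hPIm hPpos

lemma q_neg_of_mem_orth (hPdim : Module.finrank ℝ P = 3) {n : SplitOct} (hn : n ∈ orth P)
    (hn0 : n ≠ 0) : q n < 0 := by
  by_contra! hqn
  have hnP : n ∉ P := fun h => hn0 (Submodule.disjoint_def.1 (disjoint_orth hPpos) n h hn)
  have hnonneg : ∀ x ∈ P ⊔ ℝ ∙ n, 0 ≤ q x := by
    intro x hx
    obtain ⟨p, hp, _, hm, rfl⟩ := Submodule.mem_sup.1 hx
    obtain ⟨s, rfl⟩ := Submodule.mem_span_singleton.1 hm
    have hqp : 0 ≤ q p := by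
      rcases eq_or_ne p 0 with rfl | hp0
      · simp [q_apply]
      · exact (hPpos p hp hp0).le
    rw [q_add, q_smul, polar_smul_right, polar_symm, hn.2 p hp]
    nlinarith [mul_nonneg (sq_nonneg s) hqn]
  have h4 := finrank_le_three_of_nonneg
    (sup_le hPIm ((Submodule.span_singleton_le_iff_mem n Im).2 hn.1)) hnonneg
  rw [Submodule.finrank_sup_span_singleton hnP, hPdim] at h4
  omega

lemma isIsotropicLine_span_add {u v : SplitOct} (hu : u ∈ P) (hqu : q u = 1)
    (hv : v ∈ orth P) (hqv : q v = -1) : IsIsotropicLine (Submodule.span ℝ {u + v}) := by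
  refine ⟨u + v, Im.add_mem (hPIm hu) hv.1, fun h => ?_, ?_, rfl⟩
  · have hu0 : u = 0 := Submodule.disjoint_def.1 (disjoint_orth hPpos) u hu
      (eq_neg_of_add_eq_zero_left h ▸ (orth P).neg_mem hv)
    simp [hu0, q_apply] at hqu
  · rw [q_add, hqu, hqv, polar_symm, hv.2 u hu]
    ring

lemma exists_span_add_eq (hPdim : Module.finrank ℝ P = 3) {x : SplitOct} (hx : x ∈ Im)
    (hx0 : x ≠ 0) (hqx : q x = 0) :
    ∃ u v : SplitOct, (u ∈ P ∧ q u = 1 ∧ v ∈ orth P ∧ q v = -1) ∧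
      Submodule.span ℝ {u + v} = Submodule.span ℝ {x} := by
  obtain ⟨p, hp, m, hm, rfl⟩ := exists_eq_add_of_mem_Im hPpos hPIm hx
  have hqm : q m = -q p := by
    rw [q_add, polar_symm, hm.2 p hp] at hqx
    linarith
  have hp0 : p ≠ 0 := by
    rintro rfl
    have hm0 : m ≠ 0 := by simpa using hx0
    have := q_neg_of_mem_orth hPIm hPpos hPdim hm hm0
    simp [hqm, q_apply] at this
  have hqp := hPpos p hp hp0
  set t := (√(q p))⁻¹
  have ht : t ^ 2 * q p = 1 := by
    rw [inv_pow, Real.sq_sqrt hqp.le, inv_mul_cancel₀ hqp.ne']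
  refine ⟨t • p, t • m, ⟨P.smul_mem t hp, by rw [q_smul, ht], (orth P).smul_mem t hm,
    by rw [q_smul, hqm, mul_neg, ht]⟩, ?_⟩
  rw [← smul_add]
  exact Submodule.span_singleton_smul_eq (isUnit_iff_ne_zero.2 (by positivity)) _

end Spacelike

lemma eq_or_eq_neg_of_span_add_eq {P : Submodule ℝ SplitOct}
    (hPpos : ∀ v ∈ P, v ≠ 0 → 0 < q v) {u v u' v' : SplitOct} (hu : u ∈ P) (hqu : q u = 1)
    (hv : v ∈ orth P) (hu' : u' ∈ P) (hqu' : q u' = 1) (hv' : v' ∈ orth P)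
    (h : Submodule.span ℝ {u' + v'} = Submodule.span ℝ {u + v}) :
    (u' = u ∧ v' = v) ∨ (u' = -u ∧ v' = -v) := by
  obtain ⟨c, hc⟩ := Submodule.span_singleton_eq_span_singleton.1 h.symm
  obtain ⟨rfl, rfl⟩ := eq_of_add_eq_add hPpos (P.smul_mem c hu) ((orth P).smul_mem c hv) hu' hv'
    (by rw [← hc, Units.smul_def, smul_add])
  have hc2 : (c : ℝ) ^ 2 = 1 := by simpa [q_smul, hqu] using hqu'
  rcases sq_eq_one_iff.1 hc2 with hc1 | hc1 <;> simp [hc1]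

/-- For a spacelike 3-plane `P ⊆ Im 𝕆'`, the map `(u,v) ↦ ℝ(u+v)`, for
`u ∈ P` with `q u = 1` and `v ∈ P⊥` with `q v = -1`, surjects onto the isotropic lines of
`Im 𝕆'`, exactly two-to-one: the fiber over each isotropic line is a pair `{(u,v), (-u,-v)}`. -/
theorem isotropic_lines_two_to_one
    (P : Submodule ℝ SplitOct) (hPIm : P ≤ Im)
    (hPdim : Module.finrank ℝ P = 3)
    (hPpos : ∀ v ∈ P, v ≠ 0 → 0 < q v) :
    (∀ u v : SplitOct, u ∈ P → q u = 1 → v ∈ orth P → q v = -1 →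
      IsIsotropicLine (Submodule.span ℝ {u + v})) ∧
    ∀ ℓ : Submodule ℝ SplitOct, IsIsotropicLine ℓ →
      ∃ u v : SplitOct,
        (u ∈ P ∧ q u = 1 ∧ v ∈ orth P ∧ q v = -1) ∧
        {p : SplitOct × SplitOct |
            p.1 ∈ P ∧ q p.1 = 1 ∧ p.2 ∈ orth P ∧ q p.2 = -1 ∧
              Submodule.span ℝ {p.1 + p.2} = ℓ}
          = {(u, v), (-u, -v)} := by
  refine ⟨fun u v hu hqu hv hqv => isIsotropicLine_span_add hPIm hPpos hu hqu hv hqv, ?_⟩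
  rintro ℓ ⟨x, hx, hx0, hqx, rfl⟩
  obtain ⟨u, v, ⟨hu, hqu, hv, hqv⟩, hspan⟩ := exists_span_add_eq hPIm hPpos hPdim hx hx0 hqx
  refine ⟨u, v, ⟨hu, hqu, hv, hqv⟩, Set.ext fun ⟨u', v'⟩ => ⟨?_, ?_⟩⟩
  · rintro ⟨hu', hqu', hv', -, h⟩
    simpa using eq_or_eq_neg_of_span_add_eq hPpos hu hqu hv hu' hqu' hv' (h.trans hspan.symm)
  · simp only [Set.mem_insert_iff, Set.mem_singleton_iff, Prod.mk.injEq]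
    rintro (⟨rfl, rfl⟩ | ⟨rfl, rfl⟩)
    · exact ⟨hu, hqu, hv, hqv, hspan⟩
    · refine ⟨P.neg_mem hu, by rw [q_neg, hqu], (orth P).neg_mem hv, by rw [q_neg, hqv], ?_⟩
      rw [← neg_add, ← Set.neg_singleton, Submodule.span_neg, hspan]

end SplitOct
end
end

section
/- Let u, v ∈ P with q(u) = q(v) = 1, ⟨u,v⟩ = 0 and u ∈ N. Then the orthogonal projection π_B restricted to R(u,v) is a linear isomorphism from R(u,v) onto B; in particular R(u,v) is 2-dimensional. -/
/-!
A map `φ ∈ 𝒫₀` is determined by `t = φ 𝐣 ∈ T`, because `φ 𝐤 = φ (𝐢 × 𝐣) = 𝐢 × t`. So `𝒫₀` is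
spanned by the two maps with `t = 𝐥, 𝐥𝐢`, and `R(u,v)` is cut out of `P⊥ = {(0, w)}` by two real
linear equations. Writing `w = w₁ + w₂j` with `w₁, w₂ ∈ ℝ + ℝi` (so `w₂` records `π_B z`), they are
the real and imaginary parts of `λ w̄₁ + μ w̄₂ = 0`. For `u = p𝐣` with `|p| = 1` and `v ⊥ u`, the
product `p r̄` of `p` with the `N`-part `r𝐣` of `v` is imaginary, say `-im`, and `|λ| = 1 + m² ≠ 0`;
hence `w₁` is uniquely determined by `w₂`.
-/

noncomputable section

open Quaternion

namespace SplitOct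

/-- The imaginary unit `𝐢 = (i, 0)`. -/
def oi : SplitOct := ((⟨0, 1, 0, 0⟩ : ℍ[ℝ]), 0)

/-- The imaginary unit `𝐣 = (j, 0)`. -/
def oj : SplitOct := ((⟨0, 0, 1, 0⟩ : ℍ[ℝ]), 0)

/-- The imaginary unit `𝐤 = (k, 0)`. -/
def ok : SplitOct := ((⟨0, 0, 0, 1⟩ : ℍ[ℝ]), 0)

/-- The split unit `𝐥 = (0, 1)`. -/
def ol : SplitOct := (0, 1)

/-- `𝐥𝐢 = 𝐥·𝐢`. -/
def oli : SplitOct := mul ol oi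

/-- `𝐥𝐣 = 𝐥·𝐣`. -/
def olj : SplitOct := mul ol oj

/-- `𝐥𝐤 = 𝐥·𝐤`. -/
def olk : SplitOct := mul ol ok

/-- `L = ℝ𝐢`. -/
def Lline : Submodule ℝ SplitOct := Submodule.span ℝ {oi}

/-- `T = span{𝐥, 𝐥𝐢}`. -/
def Tplane : Submodule ℝ SplitOct := Submodule.span ℝ {ol, oli}

/-- `N = span{𝐣, 𝐤}`. -/
def Nplane : Submodule ℝ SplitOct := Submodule.span ℝ {oj, ok}

/-- `B = span{𝐥𝐣, 𝐥𝐤}`. -/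
def Bplane : Submodule ℝ SplitOct := Submodule.span ℝ {olj, olk}

/-- `P = L ⊕ N = span{𝐢, 𝐣, 𝐤}`. -/
def Pplane : Submodule ℝ SplitOct := Submodule.span ℝ {oi, oj, ok}

lemma oi_mem_P : oi ∈ Pplane := Submodule.subset_span (by simp)

lemma N_le_P : Nplane ≤ Pplane := by
  refine Submodule.span_le.mpr ?_
  rintro x hx
  simp only [Set.mem_insert_iff, Set.mem_singleton_iff] at hx
  rcases hx with rfl | rfl
  · exact Submodule.subset_span (by simp)
  · exact Submodule.subset_span (by simp)

/-- The pencil `𝒫₀` of linear maps `φ : P → Im 𝕆'` with `φ 𝐢 = 0`, `φ N ⊆ T`, and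
`φ (𝐢×n) = 𝐢×(φ n)` for all `n ∈ N`. -/
def Pzero : Set (Pplane →ₗ[ℝ] SplitOct) :=
  {φ | (∀ x, φ x ∈ Im) ∧
    φ ⟨oi, oi_mem_P⟩ = 0 ∧
    (∀ n, ∀ hn : n ∈ Nplane, φ ⟨n, N_le_P hn⟩ ∈ Tplane) ∧
    ∀ n, ∀ hn : n ∈ Nplane, ∀ hmem : cross oi n ∈ Pplane,
      φ ⟨cross oi n, hmem⟩ = cross oi (φ ⟨n, N_le_P hn⟩)}

/-- The subspace `R(u,v) = {z ∈ P⊥ : ⟨φ u, z⟩ + ⟨φ v, (uv)z⟩ = 0 for all φ ∈ 𝒫₀}`. -/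
def Rsub (u v : SplitOct) (hu : u ∈ Pplane) (hv : v ∈ Pplane) : Submodule ℝ SplitOct where
  carrier := {z | z ∈ orth Pplane ∧
    ∀ φ ∈ Pzero, polar (φ ⟨u, hu⟩) z + polar (φ ⟨v, hv⟩) (mul (mul u v) z) = 0}
  add_mem' := by
    rintro a b ⟨ha1, ha2⟩ ⟨hb1, hb2⟩
    refine ⟨(orth Pplane).add_mem ha1 hb1, fun φ hφ => ?_⟩
    rw [mul_add_right, polar_add_right, polar_add_right]
    have h1 := ha2 φ hφ
    have h2 := hb2 φ hφ
    linarith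
  zero_mem' := by
    refine ⟨(orth Pplane).zero_mem, fun φ hφ => ?_⟩
    rw [mul_zero_right, polar_zero_right, polar_zero_right, add_zero]
  smul_mem' := by
    rintro r a ⟨ha1, ha2⟩
    refine ⟨(orth Pplane).smul_mem r ha1, fun φ hφ => ?_⟩
    rw [mul_smul_right, polar_smul_right, polar_smul_right, ← mul_add, ha2 φ hφ, mul_zero]

/- The quaternion literals in `oi`, `oj`, `ok` are typed `ℍ[ℝ,-1,0,-1]`, not `ℍ[ℝ]`, and the
`Quaternion` simp lemmas do not fire on them; so `simp` keeps these vectors folded. -/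
@[simp] lemma oi_coords : oi.1.re = 0 ∧ oi.1.imI = 1 ∧ oi.1.imJ = 0 ∧ oi.1.imK = 0 ∧ oi.2 = 0 :=
  ⟨rfl, rfl, rfl, rfl, rfl⟩

@[simp] lemma oj_coords : oj.1.re = 0 ∧ oj.1.imI = 0 ∧ oj.1.imJ = 1 ∧ oj.1.imK = 0 ∧ oj.2 = 0 :=
  ⟨rfl, rfl, rfl, rfl, rfl⟩

@[simp] lemma ok_coords : ok.1.re = 0 ∧ ok.1.imI = 0 ∧ ok.1.imJ = 0 ∧ ok.1.imK = 1 ∧ ok.2 = 0 :=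
  ⟨rfl, rfl, rfl, rfl, rfl⟩

lemma oj_mem_P : oj ∈ Pplane := Submodule.subset_span (by simp)

lemma ok_mem_P : ok ∈ Pplane := Submodule.subset_span (by simp)

lemma oj_mem_N : oj ∈ Nplane := Submodule.subset_span (by simp)

lemma mem_Pplane_iff {x : SplitOct} : x ∈ Pplane ↔ x.1.re = 0 ∧ x.2 = 0 := by
  rw [Pplane, Submodule.mem_span_triple]
  constructor
  · rintro ⟨a, b, c, rfl⟩
    simp
  · rintro ⟨h1, h2⟩
    refine ⟨x.1.imI, x.1.imJ, x.1.imK, ?_⟩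
    ext <;> simp [h1, h2]

lemma mem_Nplane_iff {x : SplitOct} : x ∈ Nplane ↔ x.1.re = 0 ∧ x.1.imI = 0 ∧ x.2 = 0 := by
  rw [Nplane, Submodule.mem_span_pair]
  constructor
  · rintro ⟨a, b, rfl⟩
    simp
  · rintro ⟨h1, h2, h3⟩
    refine ⟨x.1.imJ, x.1.imK, ?_⟩
    ext <;> simp [h1, h2, h3]

lemma mem_Tplane_iff {x : SplitOct} : x ∈ Tplane ↔ x.1 = 0 ∧ x.2.imJ = 0 ∧ x.2.imK = 0 := by
  rw [Tplane, Submodule.mem_span_pair]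
  constructor
  · rintro ⟨a, b, rfl⟩
    simp [ol, oli, mul]
  · rintro ⟨h1, h2, h3⟩
    refine ⟨x.2.re, -x.2.imI, ?_⟩
    ext <;> simp [ol, oli, mul, h1, h2, h3]

lemma mem_Bplane_iff {x : SplitOct} : x ∈ Bplane ↔ x.1 = 0 ∧ x.2.re = 0 ∧ x.2.imI = 0 := by
  rw [Bplane, Submodule.mem_span_pair]
  constructor
  · rintro ⟨a, b, rfl⟩
    simp [ol, olj, olk, mul]
  · rintro ⟨h1, h2, h3⟩
    refine ⟨-x.2.imJ, -x.2.imK, ?_⟩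
    ext <;> simp [ol, olj, olk, mul, h1, h2, h3]

lemma mem_Im_iff_re {x : SplitOct} : x ∈ Im ↔ x.1.re = 0 := by
  simp [mem_Im_iff, conj, Prod.ext_iff, Quaternion.ext_iff, eq_neg_iff_add_eq_zero]

lemma mem_orth_span_iff {s : Set SplitOct} {x : SplitOct} :
    x ∈ orth (Submodule.span ℝ s) ↔ x ∈ Im ∧ ∀ y ∈ s, polar x y = 0 := by
  refine ⟨fun ⟨hx, h⟩ => ⟨hx, fun y hy => h y (Submodule.subset_span hy)⟩,
    fun ⟨hx, h⟩ => ⟨hx, fun y hy => ?_⟩⟩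
  induction hy using Submodule.span_induction with
  | mem y hy => exact h y hy
  | zero => exact polar_zero_right x
  | add y y' _ _ hy hy' => rw [polar_add_right, hy, hy', add_zero]
  | smul r y _ hy => rw [polar_smul_right, hy, mul_zero]

lemma mem_orth_Pplane_iff {x : SplitOct} : x ∈ orth Pplane ↔ x.1 = 0 := by
  rw [Pplane, mem_orth_span_iff, mem_Im_iff_re]
  simp [polar_apply, Quaternion.re_mul, Quaternion.ext_iff]

lemma mem_orth_Bplane_iff {x : SplitOct} :
    x ∈ orth Bplane ↔ x.1.re = 0 ∧ x.2.imJ = 0 ∧ x.2.imK = 0 := by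
  rw [Bplane, mem_orth_span_iff, mem_Im_iff_re]
  simp [polar_apply, Quaternion.re_mul, olj, olk, mul, ol]

lemma Pplane_linearMap_ext {M : Type*} [AddCommGroup M] [Module ℝ M] {φ ψ : Pplane →ₗ[ℝ] M}
    (hi : φ ⟨oi, oi_mem_P⟩ = ψ ⟨oi, oi_mem_P⟩) (hj : φ ⟨oj, oj_mem_P⟩ = ψ ⟨oj, oj_mem_P⟩)
    (hk : φ ⟨ok, ok_mem_P⟩ = ψ ⟨ok, ok_mem_P⟩) : φ = ψ := by
  refine LinearMap.ext_on Submodule.span_span_coe_preimage ?_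
  rintro ⟨x, hx⟩ (rfl | rfl | rfl : x = oi ∨ x = oj ∨ x = ok)
  exacts [hi, hj, hk]

lemma cross_oi_of_mem_Nplane {n : SplitOct} (hn : n ∈ Nplane) :
    cross oi n = n.1.imJ • ok - n.1.imK • oj := by
  obtain ⟨hn1, hn2, hn3⟩ := mem_Nplane_iff.mp hn
  ext <;> simp [cross, mul, conj, hn1, hn2, hn3] <;> ring

lemma cross_oi_oj : cross oi oj = ok := by
  simp [cross_oi_of_mem_Nplane oj_mem_N]

lemma cross_oi_mem_Tplane {t : SplitOct} (ht : t ∈ Tplane) : cross oi t ∈ Tplane := by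
  obtain ⟨ht1, ht2, ht3⟩ := mem_Tplane_iff.mp ht
  rw [mem_Tplane_iff]
  refine ⟨?_, ?_, ?_⟩ <;> simp [cross, mul, conj, ht1, ht2, ht3]

lemma cross_oi_cross_oi {t : SplitOct} (ht : t ∈ Tplane) : cross oi (cross oi t) = -t := by
  obtain ⟨ht1, ht2, ht3⟩ := mem_Tplane_iff.mp ht
  ext <;> simp [cross, mul, conj, ht1, ht2, ht3] <;> ring

def pencil (t : SplitOct) : Pplane →ₗ[ℝ] SplitOct where
  toFun x := (x : SplitOct).1.imJ • t + (x : SplitOct).1.imK • cross oi t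
  map_add' x y := by
    simp only [Submodule.coe_add, Prod.fst_add, Quaternion.imJ_add, Quaternion.imK_add, add_smul]
    abel
  map_smul' r x := by
    simp only [SetLike.val_smul, Prod.smul_fst, Quaternion.imJ_smul, Quaternion.imK_smul,
      smul_eq_mul, mul_smul, RingHom.id_apply, smul_add]

lemma pencil_apply (t : SplitOct) (x : Pplane) :
    pencil t x = (x : SplitOct).1.imJ • t + (x : SplitOct).1.imK • cross oi t := rfl

lemma pencil_add_smul (a b : ℝ) (t t' : SplitOct) :
    pencil (a • t + b • t') = a • pencil t + b • pencil t' := by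
  ext1 x
  simp only [pencil_apply, LinearMap.add_apply, LinearMap.smul_apply, cross_add_right,
    cross_smul_right]
  module

lemma pencil_mem_Pzero {t : SplitOct} (ht : t ∈ Tplane) : pencil t ∈ Pzero := by
  have htT : cross oi t ∈ Tplane := cross_oi_mem_Tplane ht
  have hT_le_Im : Tplane ≤ Im := fun x hx =>
    mem_Im_iff_re.mpr (by simp [(mem_Tplane_iff.mp hx).1])
  refine ⟨fun x => ?_, ?_, fun n _ => ?_, fun n hn _ => ?_⟩
  · exact Im.add_mem (Im.smul_mem _ (hT_le_Im ht)) (Im.smul_mem _ (hT_le_Im htT))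
  · simp [pencil_apply]
  · exact Tplane.add_mem (Tplane.smul_mem _ ht) (Tplane.smul_mem _ htT)
  · simp only [pencil_apply, cross_oi_of_mem_Nplane hn, cross_add_right, cross_smul_right,
      cross_oi_cross_oi ht, Prod.fst_sub, Prod.smul_fst, Quaternion.imJ_sub, Quaternion.imK_sub,
      Quaternion.imJ_smul, Quaternion.imK_smul, oj_coords, ok_coords]
    module

lemma mem_Pzero_iff {φ : Pplane →ₗ[ℝ] SplitOct} :
    φ ∈ Pzero ↔ ∃ t ∈ Tplane, φ = pencil t := by
  refine ⟨fun ⟨_, hi, hT, hcross⟩ => ?_, fun ⟨t, ht, hφ⟩ => hφ ▸ pencil_mem_Pzero ht⟩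
  have hk : φ ⟨ok, ok_mem_P⟩ = cross oi (φ ⟨oj, oj_mem_P⟩) := by
    rw [← hcross oj oj_mem_N (cross_oi_oj ▸ ok_mem_P)]
    congr
    exact cross_oi_oj.symm
  refine ⟨φ ⟨oj, oj_mem_P⟩, hT oj oj_mem_N, Pplane_linearMap_ext ?_ ?_ ?_⟩
  · rw [hi]
    simp [pencil_apply]
  · simp [pencil_apply]
  · rw [hk]
    simp [pencil_apply]

lemma ol_mem_T : ol ∈ Tplane := Submodule.subset_span (by simp)

lemma oli_mem_T : oli ∈ Tplane := Submodule.subset_span (by simp)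

section Rsub

variable {u v : SplitOct} (hu : u ∈ Pplane) (hv : v ∈ Pplane)

def rPairing (φ : Pplane →ₗ[ℝ] SplitOct) (z : SplitOct) : ℝ :=
  polar (φ ⟨u, hu⟩) z + polar (φ ⟨v, hv⟩) (mul (mul u v) z)

lemma rPairing_add_smul (a b : ℝ) (φ ψ : Pplane →ₗ[ℝ] SplitOct) (z : SplitOct) :
    rPairing hu hv (a • φ + b • ψ) z = a * rPairing hu hv φ z + b * rPairing hu hv ψ z := by
  simp only [rPairing, LinearMap.add_apply, LinearMap.smul_apply, polar_add_left,
    polar_smul_left]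
  ring

lemma mem_Rsub_iff {z : SplitOct} :
    z ∈ Rsub u v hu hv ↔
      z.1 = 0 ∧ rPairing hu hv (pencil ol) z = 0 ∧ rPairing hu hv (pencil oli) z = 0 := by
  rw [← mem_orth_Pplane_iff]
  constructor
  · rintro ⟨hz, h⟩
    exact ⟨hz, h _ (pencil_mem_Pzero ol_mem_T), h _ (pencil_mem_Pzero oli_mem_T)⟩
  · rintro ⟨hz, h₁, h₂⟩
    refine ⟨hz, fun φ hφ => ?_⟩
    obtain ⟨t, ht, rfl⟩ := mem_Pzero_iff.mp hφ
    obtain ⟨a, b, rfl⟩ := Submodule.mem_span_pair.mp ht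
    change rPairing hu hv _ z = 0
    rw [pencil_add_smul, rPairing_add_smul, h₁, h₂, mul_zero, mul_zero, add_zero]

lemma sq_add_sq_of_orthonormal {a b d e : ℝ} (hab : a ^ 2 + b ^ 2 = 1) (had : a * d + b * e = 0) :
    (a * (d ^ 2 - e ^ 2 - 1) + 2 * b * d * e) ^ 2 + (b * (e ^ 2 - d ^ 2 - 1) + 2 * a * d * e) ^ 2 =
      (1 + (a * e - b * d) ^ 2) ^ 2 := by
  linear_combination (1 - (a ^ 2 + b ^ 2) * (d ^ 2 + e ^ 2) ^ 2) * hab +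
    (a * d + b * e) * (2 * (a ^ 2 + b ^ 2) * (d ^ 2 + e ^ 2) - 2 - (a * d + b * e) ^ 2) * had

lemma exists_rPairing_pencil_eq (huN : u ∈ Nplane) (hqu : q u = 1) (huv : polar u v = 0) :
    ∃ A B g k : ℝ, A ^ 2 + B ^ 2 ≠ 0 ∧ ∀ z : SplitOct, z.1 = 0 →
      rPairing hu hv (pencil ol) z = A * z.2.re + B * z.2.imI + g * z.2.imJ + k * z.2.imK ∧
      rPairing hu hv (pencil oli) z = B * z.2.re - A * z.2.imI + k * z.2.imJ - g * z.2.imK := by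
  obtain ⟨hu1, hu2, hu3⟩ := mem_Nplane_iff.mp huN
  obtain ⟨hv1, hv2⟩ := mem_Pplane_iff.mp hv
  have hab : u.1.imJ ^ 2 + u.1.imK ^ 2 = 1 := by
    rw [q_apply, hu3, Quaternion.normSq_def', Quaternion.normSq_def', hu1, hu2] at hqu
    simpa using hqu
  have had : u.1.imJ * v.1.imJ + u.1.imK * v.1.imK = 0 := by
    rw [polar_apply, hu3, hv2] at huv
    simpa [Quaternion.re_mul, hu1, hu2] using huv
  -- With `u = p𝐣`, `v = c𝐢 + r𝐣` (`p, r ∈ ℝ + ℝi`, `c ∈ ℝ`): `A + Bi = p̄r² - p`, `g + ki = -icpr`.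
  refine ⟨u.1.imJ * (v.1.imJ ^ 2 - v.1.imK ^ 2 - 1) + 2 * u.1.imK * v.1.imJ * v.1.imK,
    u.1.imK * (v.1.imK ^ 2 - v.1.imJ ^ 2 - 1) + 2 * u.1.imJ * v.1.imJ * v.1.imK,
    v.1.imI * (u.1.imJ * v.1.imK + u.1.imK * v.1.imJ),
    v.1.imI * (u.1.imK * v.1.imK - u.1.imJ * v.1.imJ), ?_, fun z hz => ?_⟩
  · rw [sq_add_sq_of_orthonormal hab had]
    positivity
  · constructor <;>
      simp [rPairing, pencil_apply, polar_apply, mul, cross, conj, Quaternion.re_mul,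
        Quaternion.imI_mul, Quaternion.imJ_mul, Quaternion.imK_mul, hu1, hu2, hu3, hv1, hv2, hz, ol,
        oli] <;>
      ring

lemma existsUnique_of_sq_add_sq_ne_zero {A B : ℝ} (h : A ^ 2 + B ^ 2 ≠ 0) (p q : ℝ) :
    ∃! x : ℝ × ℝ, A * x.1 + B * x.2 = p ∧ B * x.1 - A * x.2 = q := by
  refine ⟨((A * p + B * q) / (A ^ 2 + B ^ 2), (B * p - A * q) / (A ^ 2 + B ^ 2)),
    ⟨by field_simp; ring, by field_simp; ring⟩, ?_⟩
  rintro ⟨x, y⟩ ⟨h₁, h₂⟩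
  ext
  · exact eq_div_of_mul_eq h (by linear_combination A * h₁ + B * h₂)
  · exact eq_div_of_mul_eq h (by linear_combination B * h₁ - A * h₂)

lemma existsUnique_mem_Rsub (huN : u ∈ Nplane) (hqu : q u = 1) (huv : polar u v = 0)
    (s t : ℝ) : ∃! z, z ∈ Rsub u v hu hv ∧ z.2.imJ = s ∧ z.2.imK = t := by
  obtain ⟨A, B, g, k, hAB, hR⟩ := exists_rPairing_pencil_eq hu hv huN hqu huv
  have hmem : ∀ z : SplitOct, z ∈ Rsub u v hu hv ↔ z.1 = 0 ∧
      A * z.2.re + B * z.2.imI = -(g * z.2.imJ + k * z.2.imK) ∧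
      B * z.2.re - A * z.2.imI = -(k * z.2.imJ - g * z.2.imK) := by
    intro z
    rw [mem_Rsub_iff]
    refine and_congr_right fun hz => ?_
    rw [(hR z hz).1, (hR z hz).2]
    constructor <;> rintro ⟨h₁, h₂⟩ <;> constructor <;> linarith
  obtain ⟨⟨x, y⟩, hxy, huniq⟩ :=
    existsUnique_of_sq_add_sq_ne_zero hAB (-(g * s + k * t)) (-(k * s - g * t))
  refine ⟨(0, ⟨x, y, s, t⟩), ⟨(hmem _).mpr ⟨rfl, hxy⟩, rfl, rfl⟩, ?_⟩
  rintro z ⟨hz, rfl, rfl⟩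
  obtain ⟨hz1, hz2⟩ := (hmem z).mp hz
  obtain ⟨hx, hy⟩ := Prod.mk.inj (huniq (z.2.re, z.2.imI) hz2)
  exact Prod.ext hz1 (Quaternion.ext _ _ hx hy rfl rfl)

lemma existsUnique_mem_Rsub_sub_mem_orth_Bplane (huN : u ∈ Nplane) (hqu : q u = 1)
    (huv : polar u v = 0) {b : SplitOct} (hb : b ∈ Bplane) :
    ∃! z, z ∈ Rsub u v hu hv ∧ z - b ∈ orth Bplane := by
  obtain ⟨hb1, -, -⟩ := mem_Bplane_iff.mp hb
  have hsub : ∀ z ∈ Rsub u v hu hv,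
      z - b ∈ orth Bplane ↔ z.2.imJ = b.2.imJ ∧ z.2.imK = b.2.imK := fun z hz => by
    simp [mem_orth_Bplane_iff, ((mem_Rsub_iff hu hv).mp hz).1, hb1, sub_eq_zero]
  obtain ⟨z, ⟨hzR, hzB⟩, huniq⟩ := existsUnique_mem_Rsub hu hv huN hqu huv b.2.imJ b.2.imK
  exact ⟨z, ⟨hzR, (hsub z hzR).mpr hzB⟩,
    fun z' ⟨hz'R, hz'B⟩ => huniq z' ⟨hz'R, (hsub z' hz'R).mp hz'B⟩⟩

lemma finrank_Rsub (huN : u ∈ Nplane) (hqu : q u = 1) (huv : polar u v = 0) :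
    Module.finrank ℝ (Rsub u v hu hv) = 2 := by
  let π : Rsub u v hu hv →ₗ[ℝ] ℝ × ℝ :=
    { toFun z := ((z : SplitOct).2.imJ, (z : SplitOct).2.imK)
      map_add' _ _ := rfl
      map_smul' _ _ := rfl }
  have hπ : Function.Bijective π := by
    refine ⟨fun z z' h => Subtype.ext ?_, fun ⟨s, t⟩ => ?_⟩
    · obtain ⟨hJ, hK⟩ := Prod.ext_iff.mp h
      exact (existsUnique_mem_Rsub hu hv huN hqu huv _ _).unique ⟨z.2, rfl, rfl⟩
        ⟨z'.2, hJ.symm, hK.symm⟩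
    · obtain ⟨z, ⟨hz, rfl, rfl⟩, -⟩ := existsUnique_mem_Rsub hu hv huN hqu huv s t
      exact ⟨⟨z, hz⟩, rfl⟩
  rw [(LinearEquiv.ofBijective π hπ).finrank_eq, Module.finrank_prod, Module.finrank_self]

end Rsub

theorem projection_R_onto_B_general
    (u v : SplitOct) (hu : u ∈ Pplane) (hv : v ∈ Pplane)
    (hqu : q u = 1) (huv : polar u v = 0) (huN : u ∈ Nplane) :
    (∀ b ∈ Bplane, ∃! z, z ∈ Rsub u v hu hv ∧ z - b ∈ orth Bplane) ∧
    Module.finrank ℝ (Rsub u v hu hv) = 2 :=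
  ⟨fun _ hb => existsUnique_mem_Rsub_sub_mem_orth_Bplane hu hv huN hqu huv hb,
    finrank_Rsub hu hv huN hqu huv⟩

/-- For orthonormal `u, v ∈ P` with `u ∈ N`, the orthogonal projection
`π_B` restricted to `R(u,v)` is a linear isomorphism onto `B`; in particular `R(u,v)` is
2-dimensional. -/
theorem projection_R_onto_B
    (u v : SplitOct) (hu : u ∈ Pplane) (hv : v ∈ Pplane)
    (hqu : q u = 1) (hqv : q v = 1) (huv : polar u v = 0) (huN : u ∈ Nplane) :
    (∀ b ∈ Bplane, ∃! z, z ∈ Rsub u v hu hv ∧ z - b ∈ orth Bplane) ∧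
    Module.finrank ℝ (Rsub u v hu hv) = 2 :=
  projection_R_onto_B_general u v hu hv hqu huv huN

end SplitOct
end
end
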